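/- In the subspace-constrained sketch-and-project setting with projectors P := I − (Q A B^{−1/2})† Q A B^{−1/2} and Z := P B^{−1/2} Aᵀ Sᵀ (S A B^{−1/2} P B^{−1/2} Aᵀ Sᵀ)† S A B^{−1/2} P, the error decrease in each iteration satisfies ||B^{1/2}(x^{k+1} − x*)||₂² = ||B^{1/2}(x^k − x*)||₂² − ||Z B^{1/2}(x^k − x*)||₂², where x^{k+1} is the minimizer of ||x − x^k||_B subject to SAx = Sb and QAx = Qb, and x* is the minimizer of ||x − x^0||_B over {x : Ax = b}. -/

import Mathlib

/-!
In the whitened coordinates `u = B^{1/2}(x^k - x*)` and `v = B^{1/2}(x^{k+1} - x^k)` the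
constraints say that `u` and `v` lie in `ker (Q A B^{-1/2})` and `u + v` in `ker (S A B^{-1/2})`,
while minimality of `x^{k+1}` makes `v` orthogonal to the intersection of these two kernels.
`P` is the orthogonal projector onto the first kernel and `Z` the orthogonal projector onto the
row space of `S A B^{-1/2} P`; hence `v + Z u` lies in the intersection and is orthogonal to
itself, so `v = -Z u`, and the identity is Pythagoras for `Z`.
-/

open Matrix

/-- `Mp` is the Moore–Penrose pseudoinverse of `M` (the four Penrose conditions,
which characterize it uniquely). -/
def IsMoorePenrose {k l : Type*} [Fintype k] [Fintype l]
    (M : Matrix k l ℝ) (Mp : Matrix l k ℝ) : Prop :=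
  M * Mp * M = M ∧ Mp * M * Mp = Mp ∧ (M * Mp)ᵀ = M * Mp ∧ (Mp * M)ᵀ = Mp * M

/-- The square root of a positive semidefinite matrix (the definition `Matrix.PosSemidef.sqrt`
of the older Mathlib, since removed). -/
noncomputable def Matrix.PosSemidef.sqrt {n 𝕜 : Type*} [Fintype n] [DecidableEq n] [RCLike 𝕜]
    [PartialOrder 𝕜] [StarOrderedRing 𝕜]
    {A : Matrix n n 𝕜} (hA : A.PosSemidef) : Matrix n n 𝕜 :=
  hA.1.eigenvectorUnitary.1 * diagonal ((↑) ∘ (√·) ∘ hA.1.eigenvalues) *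
  (star hA.1.eigenvectorUnitary : Matrix n n 𝕜)

namespace Matrix.PosSemidef

variable {n : Type*} [Fintype n] [DecidableEq n] {A : Matrix n n ℝ}

lemma isSymm_sqrt (hA : A.PosSemidef) : hA.sqrt.IsSymm := by
  have hD : (diagonal ((RCLike.ofReal : ℝ → ℝ) ∘ (√·) ∘ hA.1.eigenvalues) : Matrix n n ℝ)ᵀ =
      diagonal ((RCLike.ofReal : ℝ → ℝ) ∘ (√·) ∘ hA.1.eigenvalues) :=
    diagonal_transpose _
  rw [IsSymm, sqrt, transpose_mul, transpose_mul, hD, star_eq_conjTranspose,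
    conjTranspose_eq_transpose_of_trivial, transpose_transpose, Matrix.mul_assoc]

lemma sqrt_mul_self (hA : A.PosSemidef) : hA.sqrt * hA.sqrt = A := by
  set U : Matrix n n ℝ := hA.1.eigenvectorUnitary.1
  set D : Matrix n n ℝ := diagonal ((RCLike.ofReal : ℝ → ℝ) ∘ (√·) ∘ hA.1.eigenvalues)
  have hU : star U * U = 1 := Unitary.coe_star_mul_self hA.1.eigenvectorUnitary
  calc hA.sqrt * hA.sqrt = U * (D * (star U * U) * D) * star U := by
        simp only [sqrt, U, D, Matrix.mul_assoc]
    _ = U * diagonal ((RCLike.ofReal : ℝ → ℝ) ∘ hA.1.eigenvalues) * star U := by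
        rw [hU, Matrix.mul_one, diagonal_mul_diagonal]
        congr 3
        funext i
        simp [Real.mul_self_sqrt (hA.eigenvalues_nonneg i)]
    _ = A := by
        conv_rhs => rw [hA.1.spectral_theorem, Unitary.conjStarAlgAut_apply]

end Matrix.PosSemidef

namespace Matrix.PosDef

variable {n : Type*} [Fintype n] [DecidableEq n] {A : Matrix n n ℝ}

lemma isUnit_sqrt (hA : A.PosDef) : IsUnit hA.posSemidef.sqrt :=
  isUnit_of_mul_isUnit_left (hA.posSemidef.sqrt_mul_self ▸ hA.isUnit)

lemma inv_sqrt_mul_sqrt (hA : A.PosDef) : hA.posSemidef.sqrt⁻¹ * hA.posSemidef.sqrt = 1 :=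
  nonsing_inv_mul _ ((isUnit_iff_isUnit_det _).mp hA.isUnit_sqrt)

lemma sqrt_mul_inv_sqrt (hA : A.PosDef) : hA.posSemidef.sqrt * hA.posSemidef.sqrt⁻¹ = 1 :=
  mul_nonsing_inv _ ((isUnit_iff_isUnit_det _).mp hA.isUnit_sqrt)

end Matrix.PosDef

lemma Matrix.isStarProjection_iff_isSymm {n : Type*} [Fintype n] {P : Matrix n n ℝ} :
    IsStarProjection P ↔ IsIdempotentElem P ∧ P.IsSymm := by
  rw [_root_.isStarProjection_iff, ← isHermitian_iff_isSymm]
  rfl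

lemma Matrix.IsSymm.dotProduct_mulVec_comm {n : Type*} [Fintype n] {B : Matrix n n ℝ}
    (hB : B.IsSymm) (x y : n → ℝ) : x ⬝ᵥ (B *ᵥ y) = (B *ᵥ x) ⬝ᵥ y := by
  rw [dotProduct_mulVec, ← mulVec_transpose, hB.eq]

lemma Matrix.IsSymm.dotProduct_mul_self_mulVec {n : Type*} [Fintype n] {B : Matrix n n ℝ}
    (hB : B.IsSymm) (x y : n → ℝ) : x ⬝ᵥ ((B * B) *ᵥ y) = (B *ᵥ x) ⬝ᵥ (B *ᵥ y) := by
  rw [← mulVec_mulVec, hB.dotProduct_mulVec_comm]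

lemma IsStarProjection.dotProduct_sub_mulVec_self {n : Type*} [Fintype n] {Z : Matrix n n ℝ}
    (hZ : IsStarProjection Z) (u : n → ℝ) :
    (u - Z *ᵥ u) ⬝ᵥ (u - Z *ᵥ u) = u ⬝ᵥ u - (Z *ᵥ u) ⬝ᵥ (Z *ᵥ u) := by
  obtain ⟨hidem, hsymm⟩ := Matrix.isStarProjection_iff_isSymm.mp hZ
  have hZu : (Z *ᵥ u) ⬝ᵥ (Z *ᵥ u) = u ⬝ᵥ (Z *ᵥ u) := by
    rw [← hsymm.dotProduct_mulVec_comm, mulVec_mulVec, hidem.eq]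
  simp only [dotProduct_sub, sub_dotProduct, dotProduct_comm (Z *ᵥ u) u, hZu]
  ring

lemma Matrix.IsSymm.dotProduct_mulVec_sub_eq_zero {n : Type*} [Fintype n]
    {B : Matrix n n ℝ} (hB : B.IsSymm) {K : Set (n → ℝ)} {x y h : n → ℝ}
    (hmin : ∀ z ∈ K, (x - y) ⬝ᵥ (B *ᵥ (x - y)) ≤ (z - y) ⬝ᵥ (B *ᵥ (z - y)))
    (hline : ∀ t : ℝ, x + t • h ∈ K) :
    h ⬝ᵥ (B *ᵥ (x - y)) = 0 := by
  have hquad : ∀ t : ℝ,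
      0 ≤ h ⬝ᵥ (B *ᵥ h) * (t * t) + 2 * h ⬝ᵥ (B *ᵥ (x - y)) * t + 0 := fun t => by
    have := hmin _ (hline t)
    rw [add_sub_right_comm] at this
    simp only [mulVec_add, mulVec_smul, dotProduct_add, add_dotProduct, dotProduct_smul,
      smul_dotProduct, smul_eq_mul, hB.dotProduct_mulVec_comm (x - y) h,
      dotProduct_comm (B *ᵥ (x - y)) h]
      at this
    linear_combination this
  have := discrim_le_zero hquad
  rw [discrim] at this
  nlinarith [sq_nonneg (h ⬝ᵥ (B *ᵥ (x - y)))]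

namespace IsMoorePenrose

variable {k l : Type*} [Fintype k] [Fintype l]

lemma transpose {M : Matrix k l ℝ} {X : Matrix l k ℝ} (h : IsMoorePenrose M X) :
    IsMoorePenrose Mᵀ Xᵀ := by
  obtain ⟨h1, h2, h3, h4⟩ := h
  refine ⟨?_, ?_, ?_, ?_⟩
  · rw [← transpose_mul, ← transpose_mul, ← Matrix.mul_assoc, h1]
  · rw [← transpose_mul, ← transpose_mul, ← Matrix.mul_assoc, h2]
  · rw [← transpose_mul, h4, h4]
  · rw [← transpose_mul, h3, h3]

lemma unique {M : Matrix k l ℝ} {X Y : Matrix l k ℝ} (hX : IsMoorePenrose M X)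
    (hY : IsMoorePenrose M Y) : X = Y := by
  obtain ⟨hX1, hX2, hX3, hX4⟩ := hX
  obtain ⟨hY1, hY2, hY3, hY4⟩ := hY
  have hXM : X * M = Y * M * (X * M) :=
    calc X * M = (X * (M * Y * M))ᵀ := by rw [hY1, hX4]
      _ = (Y * M)ᵀ * (X * M)ᵀ := by simp only [transpose_mul, Matrix.mul_assoc]
      _ = Y * M * (X * M) := by rw [hY4, hX4]
  have hMY : M * Y = M * Y * (M * X) :=
    calc M * Y = (M * X * M * Y)ᵀ := by rw [hX1, hY3]
      _ = (M * Y)ᵀ * (M * X)ᵀ := by simp only [transpose_mul, Matrix.mul_assoc]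
      _ = M * Y * (M * X) := by rw [hY3, hX3]
  calc X = Y * M * (X * M) * X := by rw [← hXM, hX2]
    _ = Y * M * Y * (M * X) := by rw [Matrix.mul_assoc (Y * M), hX2, hY2, Matrix.mul_assoc]
    _ = Y * (M * Y) := by rw [Matrix.mul_assoc Y M Y, Matrix.mul_assoc Y (M * Y), ← hMY]
    _ = Y := by rw [← Matrix.mul_assoc, hY2]

lemma isSymm {M : Matrix k k ℝ} {X : Matrix k k ℝ} (hM : M.IsSymm) (h : IsMoorePenrose M X) :
    X.IsSymm :=
  (hM.eq ▸ h.transpose).unique h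

lemma isStarProjection_one_sub_mul [DecidableEq l] {M : Matrix k l ℝ} {X : Matrix l k ℝ}
    (h : IsMoorePenrose M X) : IsStarProjection (1 - X * M) := by
  refine Matrix.isStarProjection_iff_isSymm.mpr ⟨IsIdempotentElem.one_sub ?_, ?_⟩
  · rw [IsIdempotentElem, ← Matrix.mul_assoc, h.2.1]
  · rw [IsSymm, transpose_sub, transpose_one, h.2.2.2]

lemma mul_one_sub_mul [DecidableEq l] {M : Matrix k l ℝ} {X : Matrix l k ℝ}
    (h : IsMoorePenrose M X) : M * (1 - X * M) = 0 := by
  rw [Matrix.mul_sub, Matrix.mul_one, ← Matrix.mul_assoc, h.1, sub_self]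

variable {C : Matrix k l ℝ} {X : Matrix k k ℝ}

lemma mul_transpose_self_mul_mul (h : IsMoorePenrose (C * Cᵀ) X) : C * Cᵀ * X * C = C := by
  classical
  have hF : (1 - C * Cᵀ * X) * (C * Cᵀ) = 0 := by
    rw [Matrix.sub_mul, Matrix.one_mul, h.1, sub_self]
  rw [← conjTranspose_eq_transpose_of_trivial, mul_self_mul_conjTranspose_eq_zero,
    Matrix.sub_mul, Matrix.one_mul, sub_eq_zero, conjTranspose_eq_transpose_of_trivial] at hF
  exact hF.symm

lemma isStarProjection_transpose_mul_mul (h : IsMoorePenrose (C * Cᵀ) X) :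
    IsStarProjection (Cᵀ * X * C) := by
  refine Matrix.isStarProjection_iff_isSymm.mpr ⟨?_, ?_⟩
  · calc Cᵀ * X * C * (Cᵀ * X * C) = Cᵀ * X * (C * Cᵀ * X * C) := by
          simp only [Matrix.mul_assoc]
      _ = Cᵀ * X * C := by rw [h.mul_transpose_self_mul_mul]
  · have hX : X.IsSymm := h.isSymm (by rw [IsSymm, transpose_mul, transpose_transpose])
    rw [IsSymm, transpose_mul, transpose_mul, transpose_transpose, hX.eq, Matrix.mul_assoc]

end IsMoorePenrose

namespace SubspaceConstrained

variable {k l n : Type*} [Fintype k] [Fintype l] [Fintype n] [DecidableEq n]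
  {M : Matrix k n ℝ} {W : Matrix l n ℝ} {N1 : Matrix n k ℝ} {N2 : Matrix l l ℝ}
  {P Z : Matrix n n ℝ}

lemma isMoorePenrose_gram_and_eq (hN1 : IsMoorePenrose M N1) (hP : P = 1 - N1 * M)
    (hN2 : IsMoorePenrose (W * P * Wᵀ) N2) (hZ : Z = P * Wᵀ * N2 * (W * P)) :
    IsMoorePenrose ((W * P) * (W * P)ᵀ) N2 ∧ Z = (W * P)ᵀ * N2 * (W * P) := by
  obtain ⟨hPP, hPsymm⟩ :=
    Matrix.isStarProjection_iff_isSymm.mp (hP ▸ hN1.isStarProjection_one_sub_mul)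
  have hWP : (W * P)ᵀ = P * Wᵀ := by rw [transpose_mul, hPsymm.eq]
  rw [hWP, ← Matrix.mul_assoc, Matrix.mul_assoc W, hPP.eq]
  exact ⟨hN2, hZ⟩

lemma isStarProjection (hN1 : IsMoorePenrose M N1) (hP : P = 1 - N1 * M)
    (hN2 : IsMoorePenrose (W * P * Wᵀ) N2) (hZ : Z = P * Wᵀ * N2 * (W * P)) :
    IsStarProjection Z := by
  obtain ⟨hN2', hZ'⟩ := isMoorePenrose_gram_and_eq hN1 hP hN2 hZ
  exact hZ' ▸ hN2'.isStarProjection_transpose_mul_mul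

lemma add_eq_sub_mulVec (hN1 : IsMoorePenrose M N1) (hP : P = 1 - N1 * M)
    (hN2 : IsMoorePenrose (W * P * Wᵀ) N2) (hZ : Z = P * Wᵀ * N2 * (W * P)) {u v : n → ℝ}
    (hu : M *ᵥ u = 0) (hv : M *ᵥ v = 0) (huv : W *ᵥ (u + v) = 0)
    (horth : ∀ g, W *ᵥ g = 0 → M *ᵥ g = 0 → g ⬝ᵥ v = 0) :
    u + v = u - Z *ᵥ u := by
  obtain ⟨hN2', hZ'⟩ := isMoorePenrose_gram_and_eq hN1 hP hN2 hZ
  have hPfix : ∀ x, M *ᵥ x = 0 → P *ᵥ x = x := fun x hx => by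
    rw [hP, sub_mulVec, one_mulVec, ← mulVec_mulVec, hx, mulVec_zero, sub_zero]
  have hMZ : M * Z = 0 := by
    rw [hZ, hP]
    simp only [← Matrix.mul_assoc, hN1.mul_one_sub_mul, Matrix.zero_mul]
  have hCZ : W * P * Z = W * P :=
    calc W * P * Z = W * P * (W * P)ᵀ * N2 * (W * P) := by
          rw [hZ']; simp only [Matrix.mul_assoc]
      _ = W * P := hN2'.mul_transpose_self_mul_mul
  have hWZ : ∀ x, W *ᵥ (Z *ᵥ x) = W *ᵥ (P *ᵥ x) := fun x =>
    calc W *ᵥ (Z *ᵥ x) = W *ᵥ (P *ᵥ (Z *ᵥ x)) := by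
          rw [hPfix (Z *ᵥ x) (by rw [mulVec_mulVec, hMZ, zero_mulVec])]
      _ = W *ᵥ (P *ᵥ x) := by simp only [mulVec_mulVec, ← Matrix.mul_assoc, hCZ]
  have hZ0 : ∀ x, W *ᵥ x = 0 → M *ᵥ x = 0 → Z *ᵥ x = 0 := fun x hWx hMx => by
    rw [hZ', ← mulVec_mulVec x _ (W * P), ← mulVec_mulVec x W P, hPfix x hMx, hWx, mulVec_zero]
  set w := v + Z *ᵥ u with hw
  have hMw : M *ᵥ w = 0 := by
    rw [mulVec_add, hv, mulVec_mulVec, hMZ, zero_mulVec, add_zero]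
  have hWw : W *ᵥ w = 0 := by
    rw [mulVec_add, hWZ, hPfix u hu, add_comm, ← mulVec_add, huv]
  have hZsymm := (Matrix.isStarProjection_iff_isSymm.mp (isStarProjection hN1 hP hN2 hZ)).2
  have hww : w ⬝ᵥ w = 0 := by
    nth_rewrite 2 [hw]
    rw [dotProduct_add, horth w hWw hMw, hZsymm.dotProduct_mulVec_comm, hZ0 w hWw hMw,
      zero_dotProduct, add_zero]
  rw [sub_eq_add_neg, eq_neg_of_add_eq_zero_left (dotProduct_self_eq_zero.mp hww)]

end SubspaceConstrained

theorem stmt_3_general {m n d l : ℕ}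
    (A : Matrix (Fin m) (Fin n) ℝ) (b : Fin m → ℝ)
    (B : Matrix (Fin n) (Fin n) ℝ) (hB : B.PosDef)
    (Q : Matrix (Fin d) (Fin m) ℝ) (S : Matrix (Fin l) (Fin m) ℝ)
    -- `Bh = B^{1/2}` and `Bih = B^{-1/2}`
    (Bh : Matrix (Fin n) (Fin n) ℝ) (hBh : Bh = hB.posSemidef.sqrt)
    (Bih : Matrix (Fin n) (Fin n) ℝ) (hBih : Bih = (hB.posSemidef.sqrt)⁻¹)
    -- `N1 = (Q A B^{-1/2})†` and `P = I - N1 (Q A B^{-1/2})`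
    (N1 : Matrix (Fin n) (Fin d) ℝ) (hN1 : IsMoorePenrose (Q * A * Bih) N1)
    (P : Matrix (Fin n) (Fin n) ℝ) (hP : P = 1 - N1 * (Q * A * Bih))
    -- `N2 = (S A B^{-1/2} P B^{-1/2} Aᵀ Sᵀ)†` and the projector `Z`
    (N2 : Matrix (Fin l) (Fin l) ℝ)
    (hN2 : IsMoorePenrose (S * A * Bih * P * Bih * Aᵀ * Sᵀ) N2)
    (Z : Matrix (Fin n) (Fin n) ℝ)
    (hZ : Z = P * Bih * Aᵀ * Sᵀ * N2 * (S * A * Bih * P))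
    (xstar : Fin n → ℝ) (hxstar_sol : A *ᵥ xstar = b)
    -- the current iterate satisfies `Q A xk = Q b`
    (xk xk1 : Fin n → ℝ) (hxk : (Q * A) *ᵥ xk = Q *ᵥ b)
    -- `xk1` is the minimizer of `‖x - xk‖_B` subject to `SAx = Sb`, `QAx = Qb`
    (hxk1S : (S * A) *ᵥ xk1 = S *ᵥ b)
    (hxk1Q : (Q * A) *ᵥ xk1 = Q *ᵥ b)
    (hxk1min : ∀ y : Fin n → ℝ, (S * A) *ᵥ y = S *ᵥ b → (Q * A) *ᵥ y = Q *ᵥ b →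
      (xk1 - xk) ⬝ᵥ (B *ᵥ (xk1 - xk)) ≤ (y - xk) ⬝ᵥ (B *ᵥ (y - xk))) :
    (Bh *ᵥ (xk1 - xstar)) ⬝ᵥ (Bh *ᵥ (xk1 - xstar)) =
      (Bh *ᵥ (xk - xstar)) ⬝ᵥ (Bh *ᵥ (xk - xstar)) -
      (Z *ᵥ (Bh *ᵥ (xk - xstar))) ⬝ᵥ (Z *ᵥ (Bh *ᵥ (xk - xstar))) := by
  have hBh_symm : Bh.IsSymm := hBh ▸ hB.posSemidef.isSymm_sqrt
  have hBhBh : Bh * Bh = B := hBh ▸ hB.posSemidef.sqrt_mul_self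
  have hBihBh : Bih * Bh = 1 := hBih ▸ hBh ▸ hB.inv_sqrt_mul_sqrt
  have hBhBih : Bh * Bih = 1 := hBih ▸ hBh ▸ hB.sqrt_mul_inv_sqrt
  have hW : (S * A * Bih)ᵀ = Bih * Aᵀ * Sᵀ := by
    have hBih_symm : Bih.IsSymm := hBih ▸ hB.posSemidef.isSymm_sqrt.inv
    rw [transpose_mul, transpose_mul, hBih_symm.eq, Matrix.mul_assoc]
  have hN2' : IsMoorePenrose (S * A * Bih * P * (S * A * Bih)ᵀ) N2 := by
    rw [hW]; simpa only [Matrix.mul_assoc] using hN2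
  have hZ' : Z = P * (S * A * Bih)ᵀ * N2 * (S * A * Bih * P) := by
    rw [hZ, hW]; simp only [Matrix.mul_assoc]
  have hwhiten : ∀ {r : ℕ} (R : Matrix (Fin r) (Fin m) ℝ) x,
      (R * A * Bih) *ᵥ (Bh *ᵥ x) = (R * A) *ᵥ x :=
    fun R x => by rw [mulVec_mulVec, Matrix.mul_assoc, hBihBh, Matrix.mul_one]
  set u := Bh *ᵥ (xk - xstar)
  set v := Bh *ᵥ (xk1 - xk)
  have hsplit : Bh *ᵥ (xk1 - xstar) = u + v := by
    rw [← mulVec_add, sub_add_sub_cancel']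
  have hu : (Q * A * Bih) *ᵥ u = 0 := by
    rw [hwhiten, mulVec_sub, hxk, ← mulVec_mulVec, hxstar_sol, sub_self]
  have hv : (Q * A * Bih) *ᵥ v = 0 := by
    rw [hwhiten, mulVec_sub, hxk, hxk1Q, sub_self]
  have huv : (S * A * Bih) *ᵥ (u + v) = 0 := by
    rw [← hsplit, hwhiten, mulVec_sub, hxk1S, ← mulVec_mulVec, hxstar_sol, sub_self]
  have horth : ∀ g, (S * A * Bih) *ᵥ g = 0 → (Q * A * Bih) *ᵥ g = 0 → g ⬝ᵥ v = 0 := by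
    intro g hSg hQg
    rw [← one_mulVec g, ← hBhBih, ← mulVec_mulVec, ← hBh_symm.dotProduct_mul_self_mulVec, hBhBh]
    refine (isHermitian_iff_isSymm.mp hB.isHermitian).dotProduct_mulVec_sub_eq_zero
      (K := {y | (S * A) *ᵥ y = S *ᵥ b ∧ (Q * A) *ᵥ y = Q *ᵥ b})
      (fun y hy => hxk1min y hy.1 hy.2) fun t => ⟨?_, ?_⟩
    · rw [mulVec_add, mulVec_smul, mulVec_mulVec, hSg, smul_zero, add_zero, hxk1S]
    · rw [mulVec_add, mulVec_smul, mulVec_mulVec, hQg, smul_zero, add_zero, hxk1Q]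
  rw [hsplit, SubspaceConstrained.add_eq_sub_mulVec hN1 hP hN2' hZ' hu hv huv horth]
  exact (SubspaceConstrained.isStarProjection hN1 hP hN2' hZ').dotProduct_sub_mulVec_self u

/-- error decrease. In the subspace-constrained sketch-and-project
setting, `‖B^{1/2}(x^{k+1} − x*)‖₂² = ‖B^{1/2}(x^k − x*)‖₂² − ‖Z B^{1/2}(x^k − x*)‖₂²`. -/
theorem stmt_3 {m n d l : ℕ}
    (A : Matrix (Fin m) (Fin n) ℝ) (b : Fin m → ℝ)
    (hconsistent : ∃ x, A *ᵥ x = b)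
    (B : Matrix (Fin n) (Fin n) ℝ) (hB : B.PosDef)
    (Q : Matrix (Fin d) (Fin m) ℝ) (S : Matrix (Fin l) (Fin m) ℝ)
    -- `Bh = B^{1/2}` and `Bih = B^{-1/2}`
    (Bh : Matrix (Fin n) (Fin n) ℝ) (hBh : Bh = hB.posSemidef.sqrt)
    (Bih : Matrix (Fin n) (Fin n) ℝ) (hBih : Bih = (hB.posSemidef.sqrt)⁻¹)
    -- `N1 = (Q A B^{-1/2})†` and `P = I - N1 (Q A B^{-1/2})`
    (N1 : Matrix (Fin n) (Fin d) ℝ) (hN1 : IsMoorePenrose (Q * A * Bih) N1)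
    (P : Matrix (Fin n) (Fin n) ℝ) (hP : P = 1 - N1 * (Q * A * Bih))
    -- `N2 = (S A B^{-1/2} P B^{-1/2} Aᵀ Sᵀ)†` and the projector `Z`
    (N2 : Matrix (Fin l) (Fin l) ℝ)
    (hN2 : IsMoorePenrose (S * A * Bih * P * Bih * Aᵀ * Sᵀ) N2)
    (Z : Matrix (Fin n) (Fin n) ℝ)
    (hZ : Z = P * Bih * Aᵀ * Sᵀ * N2 * (S * A * Bih * P))
    -- the initial iterate satisfies `Q A x0 = Q b`
    (x0 : Fin n → ℝ) (hx0 : (Q * A) *ᵥ x0 = Q *ᵥ b)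
    -- `x*` is the minimizer of `‖x - x0‖_B` over `{x : Ax = b}`
    (xstar : Fin n → ℝ) (hxstar_sol : A *ᵥ xstar = b)
    (hxstar_min : ∀ y : Fin n → ℝ, A *ᵥ y = b →
      (xstar - x0) ⬝ᵥ (B *ᵥ (xstar - x0)) ≤ (y - x0) ⬝ᵥ (B *ᵥ (y - x0)))
    -- the current iterate satisfies `Q A xk = Q b`
    (xk xk1 : Fin n → ℝ) (hxk : (Q * A) *ᵥ xk = Q *ᵥ b)
    -- `xk1` is the minimizer of `‖x - xk‖_B` subject to `SAx = Sb`, `QAx = Qb`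
    (hxk1S : (S * A) *ᵥ xk1 = S *ᵥ b)
    (hxk1Q : (Q * A) *ᵥ xk1 = Q *ᵥ b)
    (hxk1min : ∀ y : Fin n → ℝ, (S * A) *ᵥ y = S *ᵥ b → (Q * A) *ᵥ y = Q *ᵥ b →
      (xk1 - xk) ⬝ᵥ (B *ᵥ (xk1 - xk)) ≤ (y - xk) ⬝ᵥ (B *ᵥ (y - xk))) :
    (Bh *ᵥ (xk1 - xstar)) ⬝ᵥ (Bh *ᵥ (xk1 - xstar)) =
      (Bh *ᵥ (xk - xstar)) ⬝ᵥ (Bh *ᵥ (xk - xstar)) -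
      (Z *ᵥ (Bh *ᵥ (xk - xstar))) ⬝ᵥ (Z *ᵥ (Bh *ᵥ (xk - xstar))) :=
  stmt_3_general A b B hB Q S Bh hBh Bih hBih N1 hN1 P hP N2 hN2 Z hZ xstar hxstar_sol xk xk1 hxk
    hxk1S hxk1Q hxk1min
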